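/- Let Ω ⊆ ℝ³ be open and u : Ω → ℝ³ twice continuously differentiable, and let τ(x) = vect⁻¹(u(x)) be the skew matrix field with axial vector u. Then curl(Ξ⁻¹(curl τ)) = 0 on Ω; that is, the extended operator J = curl ∘ Ξ⁻¹ ∘ curl vanishes on skew-symmetric matrix fields. -/

import Mathlib

open Matrix

/-- `Ξ⁻¹ μ = μᵀ − (1/2)tr(μ)·I` on 3×3 real matrices. -/
noncomputable def XiInv (μ : Matrix (Fin 3) (Fin 3) ℝ) : Matrix (Fin 3) (Fin 3) ℝ :=
  μᵀ - ((1 / 2 : ℝ) * Matrix.trace μ) • (1 : Matrix (Fin 3) (Fin 3) ℝ)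

/-- `vectInv v` is the unique skew-symmetric 3×3 matrix with `vectInv v *ᵥ w = v ×₃ w`. -/
noncomputable def vectInv (v : Fin 3 → ℝ) : Matrix (Fin 3) (Fin 3) ℝ :=
  !![0, -v 2, v 1; v 2, 0, -v 0; -v 1, v 0, 0]

/-- The partial derivative `∂ⱼ f` of a scalar field on `ℝ³`. -/
noncomputable def pd (j : Fin 3) (f : (Fin 3 → ℝ) → ℝ) (x : Fin 3 → ℝ) : ℝ :=
  fderiv ℝ f x (Pi.single j 1)

/-- The curl of a vector field `u : ℝ³ → ℝ³`. -/
noncomputable def curlVec (u : (Fin 3 → ℝ) → (Fin 3 → ℝ)) (x : Fin 3 → ℝ) : Fin 3 → ℝ :=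
  ![pd 1 (fun y => u y 2) x - pd 2 (fun y => u y 1) x,
    pd 2 (fun y => u y 0) x - pd 0 (fun y => u y 2) x,
    pd 0 (fun y => u y 1) x - pd 1 (fun y => u y 0) x]

/-- The row-wise curl of a matrix field. -/
noncomputable def curlMat (τ : (Fin 3 → ℝ) → Matrix (Fin 3) (Fin 3) ℝ)
    (x : Fin 3 → ℝ) : Matrix (Fin 3) (Fin 3) ℝ :=
  Matrix.of fun i j => curlVec (fun y => τ y i) x j

/-!
The matrix `Ξ⁻¹(curl vect⁻¹(u))` is the Jacobian of `-u`: its `i`-th row is the gradient of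
`-uᵢ`. The row-wise curl therefore vanishes because the curl of a gradient does, by the symmetry
of second derivatives of a `C²` function.
-/

theorem pd_comm {f : (Fin 3 → ℝ) → ℝ} {x : Fin 3 → ℝ} (hf : ContDiffAt ℝ 2 f x) (j k : Fin 3) :
    pd j (pd k f) x = pd k (pd j f) x := by
  have hdiff : DifferentiableAt ℝ (fderiv ℝ f) x :=
    (hf.fderiv_right (m := 1) (by norm_num)).differentiableAt one_ne_zero
  have pd_pd_eq : ∀ j k : Fin 3,
      pd j (pd k f) x = fderiv ℝ (fderiv ℝ f) x (Pi.single j 1) (Pi.single k 1) := by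
    intro j k
    change fderiv ℝ (fun y => fderiv ℝ f y (Pi.single k 1)) x (Pi.single j 1) = _
    rw [fderiv_clm_apply hdiff (differentiableAt_const _)]
    simp
  rw [pd_pd_eq, pd_pd_eq, (hf.isSymmSndFDerivAt (by norm_num)).eq]

theorem curlVec_grad_eq_zero {f : (Fin 3 → ℝ) → ℝ} {x : Fin 3 → ℝ} (hf : ContDiffAt ℝ 2 f x) :
    curlVec (fun y j => pd j f y) x = 0 := by
  ext k
  fin_cases k <;> simp [curlVec, pd_comm hf]

theorem curlMat_grad_eq_zero {f : Fin 3 → (Fin 3 → ℝ) → ℝ} {x : Fin 3 → ℝ}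
    (hf : ∀ i, ContDiffAt ℝ 2 (f i) x) :
    curlMat (fun y => Matrix.of fun i j => pd j (f i) y) x = 0 := by
  ext i j
  exact congrFun (curlVec_grad_eq_zero (hf i)) j

theorem XiInv_curlMat_vectInv (u : (Fin 3 → ℝ) → (Fin 3 → ℝ)) (y : Fin 3 → ℝ) :
    XiInv (curlMat (fun z => vectInv (u z)) y) = Matrix.of fun i j => pd j (fun z => -u z i) y := by
  ext i j
  fin_cases i <;> fin_cases j <;>
    simp [XiInv, curlMat, curlVec, vectInv, Matrix.trace, Fin.sum_univ_three, pd] <;> ring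

/-- If `u : Ω → ℝ³` is `C²` on an open set `Ω ⊆ ℝ³` and `τ = vect⁻¹(u)` is the skew
matrix field with axial vector `u`, then `curl(Ξ⁻¹(curl τ)) = 0` on `Ω`: the extended
operator `J = curl ∘ Ξ⁻¹ ∘ curl` vanishes on skew-symmetric matrix fields. -/
theorem J_vanishes_on_skew (Ω : Set (Fin 3 → ℝ)) (hΩ : IsOpen Ω)
    (u : (Fin 3 → ℝ) → (Fin 3 → ℝ)) (hu : ContDiffOn ℝ 2 u Ω) :
    ∀ x ∈ Ω,
      curlMat (fun y => XiInv (curlMat (fun z => vectInv (u z)) y)) x = 0 := by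
  intro x hx
  have hu_at : ∀ i, ContDiffAt ℝ 2 (fun z => u z i) x :=
    contDiffAt_pi.mp (hu.contDiffAt (hΩ.mem_nhds hx))
  simp_rw [XiInv_curlMat_vectInv]
  exact curlMat_grad_eq_zero fun i => (hu_at i).neg
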